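/- Let A ∈ ℝ^{m×n} (m ≥ 2) have rows A_1,…,A_m with ‖A_i‖ = 1 for all i and A_i ≠ ±A_j for i ≠ j. Let v ∈ ℝ^n with ‖v‖ = 1 be an eigenvector of AᵀA with eigenvalue λ satisfying 0 < λ < 1. Then (1/(m(m−1))) · Σ_{i≠j} ‖φ_{i,j}(A) v‖² ≥ λ + (2/(m(m−1)))(λ − λ²) > λ. -/

import Mathlib

open Finset Matrix

/-- The Kaczmarz Kac update: replace row `i` of `A` by the renormalized projection of
`A i` onto the orthogonal complement of `A j`. -/
noncomputable def kkPhi {m n : ℕ} (A : Matrix (Fin m) (Fin n) ℝ) (i j : Fin m) :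
    Matrix (Fin m) (Fin n) ℝ :=
  A.updateRow i (fun k =>
    (A i k - (∑ l, A i l * A j l) * A j k) / Real.sqrt (1 - (∑ l, A i l * A j l) ^ 2))

/-!
Write `c = A v` and `G = A Aᵀ`. The eigenvector equation gives `‖c‖² = λ` and `G c = λ c`.
The update `φ_{i,j}` changes only the `i`-th entry of `A v`, from `c_i` to
`(c_i - G_ij c_j) / √(1 - G_ij²)`, and the elementary inequality
`(a - g b)² / (1 - g²) ≥ a² - 2 g a b` (for `g² < 1`) yields
`‖φ_{i,j}(A) v‖² ≥ λ - 2 G_ij c_i c_j`. Summed over `i ≠ j`, the cross terms add up to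
`2 (cᵀ G c - ‖c‖²) = 2 (λ² - λ)`, which is negative exactly because `λ < 1`.
-/

section Eigenvector

variable {ι κ : Type*} [Fintype ι] [Fintype κ] {R : Type*} [CommRing R]
  {A : Matrix ι κ R} {v : κ → R} {lam : R}

theorem mulVec_dotProduct_mulVec_of_mulVec_eq_smul (heig : (Aᵀ * A) *ᵥ v = lam • v) :
    (A *ᵥ v) ⬝ᵥ (A *ᵥ v) = lam * (v ⬝ᵥ v) := by
  rw [dotProduct_comm, dotProduct_mulVec, ← transpose_transpose A, vecMul_transpose,
    transpose_transpose, mulVec_mulVec, heig, smul_dotProduct, smul_eq_mul]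

theorem mul_transpose_mulVec_mulVec_of_mulVec_eq_smul (heig : (Aᵀ * A) *ᵥ v = lam • v) :
    (A * Aᵀ) *ᵥ (A *ᵥ v) = lam • (A *ᵥ v) := by
  rw [mulVec_mulVec, Matrix.mul_assoc, ← mulVec_mulVec, heig, mulVec_smul]

end Eigenvector

theorem sq_dotProduct_lt_one_of_ne_of_ne_neg {κ : Type*} [Fintype κ] {x y : κ → ℝ}
    (hx : x ⬝ᵥ x = 1) (hy : y ⬝ᵥ y = 1) (hne : x ≠ y) (hne_neg : x ≠ -y) :
    (x ⬝ᵥ y) ^ 2 < 1 := by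
  have hpos : ∀ w : κ → ℝ, w ≠ 0 → 0 < w ⬝ᵥ w := fun w hw => by
    simpa using dotProduct_star_self_pos_iff.mpr hw
  have hsub := hpos (x - y) (sub_ne_zero.mpr hne)
  have hadd := hpos (x + y) (by rwa [← sub_neg_eq_add, sub_ne_zero])
  simp only [sub_dotProduct, dotProduct_sub, add_dotProduct, dotProduct_add, hx, hy,
    dotProduct_comm y x] at hsub hadd
  nlinarith

theorem dotProduct_self_update {ι R : Type*} [Fintype ι] [DecidableEq ι] [CommRing R]
    (c : ι → R) (i : ι) (x : R) :
    Function.update c i x ⬝ᵥ Function.update c i x = c ⬝ᵥ c - c i ^ 2 + x ^ 2 := by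
  have hupd : (fun k => Function.update c i x k * Function.update c i x k)
      = Function.update (fun k => c k * c k) i (x * x) := by
    ext k
    rcases eq_or_ne k i with rfl | hk <;> simp [*]
  simp only [dotProduct, hupd, Finset.sum_update_of_mem (Finset.mem_univ i)]
  rw [Finset.sdiff_singleton_eq_erase, ← Finset.add_sum_erase _ _ (Finset.mem_univ i)]
  ring

theorem sq_sub_two_mul_mul_le_sq_sub_div_sqrt {g : ℝ} (hg : g ^ 2 < 1) (a b : ℝ) :
    a ^ 2 - 2 * g * a * b ≤ ((a - g * b) / √(1 - g ^ 2)) ^ 2 := by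
  have h1g : 0 < 1 - g ^ 2 := sub_pos.mpr hg
  rw [div_pow, Real.sq_sqrt h1g.le, le_div_iff₀ h1g]
  -- the difference of the two sides is `g² ((a - g b)² + (1 - g²) b²)`
  nlinarith [mul_nonneg (sq_nonneg g) (sq_nonneg (a - g * b)),
    mul_nonneg (mul_nonneg (sq_nonneg g) h1g.le) (sq_nonneg b)]

section KaczmarzKac

variable {m n : ℕ} (A : Matrix (Fin m) (Fin n) ℝ) (i j : Fin m) (v : Fin n → ℝ)

theorem kkPhi_mulVec :
    kkPhi A i j *ᵥ v = Function.update (A *ᵥ v) i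
      (((A *ᵥ v) i - (A i ⬝ᵥ A j) * (A *ᵥ v) j) / √(1 - (A i ⬝ᵥ A j) ^ 2)) := by
  rw [kkPhi, updateRow_mulVec]
  congr 1
  simp only [dotProduct, mulVec, div_mul_eq_mul_div, ← Finset.sum_div, sub_mul,
    Finset.sum_sub_distrib, mul_assoc, ← Finset.mul_sum]

theorem sub_le_kkPhi_mulVec_dotProduct_self (hg : (A i ⬝ᵥ A j) ^ 2 < 1) :
    (A *ᵥ v) ⬝ᵥ (A *ᵥ v) - 2 * (A i ⬝ᵥ A j) * (A *ᵥ v) i * (A *ᵥ v) j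
      ≤ (kkPhi A i j *ᵥ v) ⬝ᵥ (kkPhi A i j *ᵥ v) := by
  rw [kkPhi_mulVec, dotProduct_self_update]
  linarith [sq_sub_two_mul_mul_le_sq_sub_div_sqrt hg ((A *ᵥ v) i) ((A *ᵥ v) j)]

end KaczmarzKac

theorem sum_sum_ne_sub_two_mul_mul_eq {ι : Type*} [Fintype ι] [DecidableEq ι]
    {G : Matrix ι ι ℝ} {c : ι → ℝ} {lam : ℝ} (hG : G *ᵥ c = lam • c) (hdiag : ∀ i, G i i = 1)
    (hc : c ⬝ᵥ c = lam) :
    ∑ i, ∑ j ∈ univ.filter (fun j => j ≠ i), (lam - 2 * G i j * c i * c j)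
      = Fintype.card ι * (Fintype.card ι - 1) * lam + 2 * (lam - lam ^ 2) := by
  have hrow : ∀ i, ∑ j ∈ univ.filter (fun j => j ≠ i), (lam - 2 * G i j * c i * c j)
      = (Fintype.card ι - 1) * lam - 2 * (lam - 1) * (c i * c i) := by
    intro i
    have hGi : ∑ j, 2 * G i j * c i * c j = 2 * c i * (lam * c i) := by
      rw [← show (G *ᵥ c) i = lam * c i by simp [hG], mulVec, dotProduct, Finset.mul_sum]
      exact Finset.sum_congr rfl fun j _ => by ring
    rw [Finset.filter_ne', Finset.sum_erase_eq_sub (Finset.mem_univ i), Finset.sum_sub_distrib,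
      hGi, hdiag, Finset.sum_const, Finset.card_univ, nsmul_eq_mul]
    ring
  simp only [hrow, Finset.sum_sub_distrib, ← Finset.mul_sum, Finset.sum_const, Finset.card_univ,
    nsmul_eq_mul]
  rw [show ∑ i, c i * c i = lam from hc]
  ring

theorem kaczmarz_kac_grows_small_singular_directions {m n : ℕ} (hm : 2 ≤ m)
    (A : Matrix (Fin m) (Fin n) ℝ)
    (hnorm : ∀ i, ∑ k, (A i k) ^ 2 = 1)
    (hdist : ∀ i j, i ≠ j → A i ≠ A j ∧ A i ≠ -A j)
    (v : Fin n → ℝ) (hv : ∑ k, (v k) ^ 2 = 1)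
    (lam : ℝ) (hlam0 : 0 < lam) (hlam1 : lam < 1)
    (heig : (Aᵀ * A).mulVec v = lam • v) :
    (1 / ((m : ℝ) * ((m : ℝ) - 1))) *
        ∑ i : Fin m, ∑ j ∈ Finset.univ.filter (fun j => j ≠ i),
          ∑ k, ((kkPhi A i j).mulVec v k) ^ 2
      ≥ lam + (2 / ((m : ℝ) * ((m : ℝ) - 1))) * (lam - lam ^ 2) ∧
    lam + (2 / ((m : ℝ) * ((m : ℝ) - 1))) * (lam - lam ^ 2) > lam := by
  have hsq : ∀ {p : ℕ} (w : Fin p → ℝ), ∑ k, w k ^ 2 = w ⬝ᵥ w := fun w => by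
    simp only [dotProduct, sq]
  have hunit : ∀ i, A i ⬝ᵥ A i = 1 := fun i => (hsq (A i)).symm.trans (hnorm i)
  have hAv : (A *ᵥ v) ⬝ᵥ (A *ᵥ v) = lam := by
    rw [mulVec_dotProduct_mulVec_of_mulVec_eq_smul heig, ← hsq, hv, mul_one]
  have hpair : ∀ i, ∀ j ∈ univ.filter (fun j => j ≠ i),
      lam - 2 * (A * Aᵀ) i j * (A *ᵥ v) i * (A *ᵥ v) j ≤ ∑ k, ((kkPhi A i j) *ᵥ v) k ^ 2 := by
    intro i j hj
    obtain ⟨hne, hne_neg⟩ := hdist i j (Finset.mem_filter.mp hj).2.symm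
    rw [hsq (kkPhi A i j *ᵥ v), ← hAv]
    exact sub_le_kkPhi_mulVec_dotProduct_self A i j v
      (sq_dotProduct_lt_one_of_ne_of_ne_neg (hunit i) (hunit j) hne hne_neg)
  have hsum := sum_sum_ne_sub_two_mul_mul_eq
    (mul_transpose_mulVec_mulVec_of_mulVec_eq_smul heig) hunit hAv
  rw [Fintype.card_fin] at hsum
  have hm2 : (2 : ℝ) ≤ m := by exact_mod_cast hm
  have hM : (0 : ℝ) < m * (m - 1) := by nlinarith
  have hgap : 0 < 2 / ((m : ℝ) * (m - 1)) * (lam - lam ^ 2) :=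
    mul_pos (by positivity) (by nlinarith)
  refine ⟨?_, by linarith⟩
  calc lam + 2 / ((m : ℝ) * (m - 1)) * (lam - lam ^ 2)
      = 1 / ((m : ℝ) * (m - 1)) * (m * (m - 1) * lam + 2 * (lam - lam ^ 2)) := by
        field_simp [show (m : ℝ) - 1 ≠ 0 by linarith]
    _ ≤ _ := by
        rw [← hsum]
        gcongr with i _ j hj
        exact hpair i j hj
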